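/- There exists a finite rotation-puzzle instance 𝒜 over the two-color tile set T_2 (the two-color COPY subpuzzle, splitting a wire into two copies) with one designated input boundary edge at its bottom and two designated output boundary edges at its top lying in two distinct columns, such that for each color c ∈ {blue, red} the instance 𝒜 has exactly one solution whose color at the input edge is c, and this solution has color c at both output edges. -/

import Mathlib

/-- The two Tantrix colors used in the two-color tile set. -/
inductive Color where
  | red
  | blue
deriving DecidableEq

/-- A tile is its clockwise color sequence: a word of length 6 over the colors,
edges indexed `0, …, 5` clockwise. -/
abbrev Tile := Fin 6 → Color

/-- Cyclic rotation of a tile by `k` steps: edge `i` of the rotated tile carries the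
color of edge `i + k` of the original sequence.  Two solutions are compared as the
assigned rotated color sequences, so orientations of a tile with identical color
sequences are identified. -/
def rotTile (k : Fin 6) (t : Tile) : Tile := fun i => t (i + k)

open Color in
/-- The two-color tile set `T₂`, consisting of the 8 color sequences
bbrrrr, rrbbbb, brrbrr, rbbrbb, rbrrrb, brbbbr, bbbbbb, rrrrrr. -/
def T2 : Set Tile :=
  { ![blue,blue,red,red,red,red],
    ![red,red,blue,blue,blue,blue],
    ![blue,red,red,blue,red,red],
    ![red,blue,blue,red,blue,blue],
    ![red,blue,red,red,red,blue],
    ![blue,red,blue,blue,blue,red],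
    ![blue,blue,blue,blue,blue,blue],
    ![red,red,red,red,red,red] }

/-- The six neighbor offsets of the hexagonal layout of `ℤ²`, listed clockwise
starting from straight up; edge `i` of a tile at `x` is the edge shared with the
neighboring point `x + dirs i`, and opposite directions differ by `3` (mod 6).
Two points are neighbors exactly if their difference is one of these offsets. -/
def dirs : Fin 6 → ℤ × ℤ := ![(0,1), (1,1), (1,0), (0,-1), (-1,-1), (-1,0)]

/-- A finite rotation-puzzle instance over the tile set `T2`:
a function from a finite set of points of `ℤ²` to `T2`. -/
structure Puzzle where
  tiles : ℤ × ℤ → Option Tile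
  finite : {x | tiles x ≠ none}.Finite
  memT2 : ∀ x t, tiles x = some t → t ∈ T2

/-- `sol` is a solution of the instance `P`: it assigns to each occupied point a
cyclic rotation of the tile placed there, such that for every pair of neighboring
occupied points the two assigned sequences give the same color to their joint edge
(edge `d` of the tile at `x` is glued to edge `d + 3` of the tile at `x + dirs d`). -/
def IsSolution (P : Puzzle) (sol : ℤ × ℤ → Option Tile) : Prop :=
  (∀ x, (P.tiles x = none → sol x = none) ∧
    (∀ t, P.tiles x = some t → ∃ k : Fin 6, sol x = some (rotTile k t))) ∧
  (∀ (x : ℤ × ℤ) (d : Fin 6) (s s' : Tile),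
    sol x = some s → sol (x + dirs d) = some s' → s d = s' (d + 3))

/-- `(x, d)` is a boundary edge of `P`: the point `x` is occupied and its
neighbor in direction `d` is not. -/
def IsBoundary (P : Puzzle) (x : ℤ × ℤ) (d : Fin 6) : Prop :=
  P.tiles x ≠ none ∧ P.tiles (x + dirs d) = none

/-- The solution `sol` has color `c` at the edge in direction `d` of the tile at `x`. -/
def SolColor (sol : ℤ × ℤ → Option Tile) (x : ℤ × ℤ) (d : Fin 6) (c : Color) : Prop :=
  ∃ s, sol x = some s ∧ s d = c

/-! Four tiles are glued along five joint edges: `brrbrr` at `(0, 0)` and `(-1, 1)`, `rrbbbb` at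
`(-1, 0)` and `rbbrbb` at `(0, 1)`. A solution rotates each tile, so it is the same as a choice of
four rotations satisfying the five gluing equations. Checking all `6 ^ 4` choices shows that the
color at the input edge forces every rotated tile, and the forced solution for either color shows
that color again at the two top edges. -/

open Color

namespace Puzzle

variable (P : Puzzle)

def rotate (k : ℤ × ℤ → Fin 6) : ℤ × ℤ → Option Tile :=
  fun x => (P.tiles x).map (rotTile (k x))

variable {P}

theorem _root_.IsSolution.exists_eq_rotate {sol : ℤ × ℤ → Option Tile} (h : IsSolution P sol) :
    ∃ k, sol = P.rotate k := by
  have hx : ∀ x, ∃ k : Fin 6, sol x = P.rotate (fun _ => k) x := by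
    intro x
    cases ht : P.tiles x with
    | none => exact ⟨0, by simp [rotate, ht, (h.1 x).1 ht]⟩
    | some t =>
      obtain ⟨k, hk⟩ := (h.1 x).2 t ht
      exact ⟨k, by simp [rotate, ht, hk]⟩
  choose k hk using hx
  exact ⟨k, funext hk⟩

theorem isSolution_rotate_iff {k : ℤ × ℤ → Fin 6} :
    IsSolution P (P.rotate k) ↔ ∀ x d s s', P.rotate k x = some s →
      P.rotate k (x + dirs d) = some s' → s d = s' (d + 3) := by
  refine ⟨fun h => h.2, fun h => ⟨fun x => ⟨fun ht => by simp [rotate, ht], fun t ht => ?_⟩, h⟩⟩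
  exact ⟨k x, by simp [rotate, ht]⟩

theorem rotate_congr {k k' : ℤ × ℤ → Fin 6}
    (h : ∀ x t, P.tiles x = some t → rotTile (k x) t = rotTile (k' x) t) :
    P.rotate k = P.rotate k' := by
  funext x
  cases ht : P.tiles x <;> simp [rotate, ht, h x]

end Puzzle

theorem solColor_iff {sol : ℤ × ℤ → Option Tile} {x : ℤ × ℤ} {d : Fin 6} {c : Color} :
    SolColor sol x d c ↔ (sol x).map (· d) = some c := by
  simp [SolColor]

instance {sol : ℤ × ℤ → Option Tile} {x : ℤ × ℤ} {d : Fin 6} {c : Color} :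
    Decidable (SolColor sol x d c) :=
  decidable_of_iff _ solColor_iff.symm

instance {P : Puzzle} {x : ℤ × ℤ} {d : Fin 6} : Decidable (IsBoundary P x d) := by
  unfold IsBoundary
  infer_instance

namespace CopyGadget

def brrbrr : Tile := ![blue, red, red, blue, red, red]
def rrbbbb : Tile := ![red, red, blue, blue, blue, blue]
def rbbrbb : Tile := ![red, blue, blue, red, blue, blue]

def tiles (x : ℤ × ℤ) : Option Tile :=
  if x = (0, 0) then some brrbrr
  else if x = (-1, 0) then some rrbbbb
  else if x = (-1, 1) then some brrbrr
  else if x = (0, 1) then some rbbrbb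
  else none

theorem eq_of_tiles_ne_none {x : ℤ × ℤ} (h : tiles x ≠ none) :
    x = (0, 0) ∨ x = (-1, 0) ∨ x = (-1, 1) ∨ x = (0, 1) := by
  unfold tiles at h
  split_ifs at h <;> simp_all

def puzzle : Puzzle where
  tiles := tiles
  finite := by
    refine ({(0, 0), (-1, 0), (-1, 1), (0, 1)} : Finset (ℤ × ℤ)).finite_toSet.subset fun x hx => ?_
    simpa using eq_of_tiles_ne_none hx
  memT2 x t h := by
    unfold tiles at h
    split_ifs at h <;> cases h <;> simp [T2, brrbrr, rrbbbb, rbbrbb]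

/-- `k₀, k₁, k₂, k₃` rotate the tiles at `(0, 0)`, `(-1, 0)`, `(-1, 1)`, `(0, 1)`; one equation
per joint edge of the gadget. -/
abbrev Glued (k₀ k₁ k₂ k₃ : Fin 6) : Prop :=
  rotTile k₀ brrbrr 0 = rotTile k₃ rbbrbb 3 ∧ rotTile k₀ brrbrr 5 = rotTile k₁ rrbbbb 2 ∧
    rotTile k₁ rrbbbb 0 = rotTile k₂ brrbrr 3 ∧ rotTile k₁ rrbbbb 1 = rotTile k₃ rbbrbb 4 ∧
    rotTile k₂ brrbrr 2 = rotTile k₃ rbbrbb 5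

theorem isSolution_rotate_iff {k : ℤ × ℤ → Fin 6} :
    IsSolution puzzle (puzzle.rotate k) ↔ Glued (k (0, 0)) (k (-1, 0)) (k (-1, 1)) (k (0, 1)) := by
  rw [Puzzle.isSolution_rotate_iff]
  constructor
  · intro h
    exact ⟨h (0, 0) 0 _ _ rfl rfl, h (0, 0) 5 _ _ rfl rfl, h (-1, 0) 0 _ _ rfl rfl,
      h (-1, 0) 1 _ _ rfl rfl, h (-1, 1) 2 _ _ rfl rfl⟩
  · rintro ⟨h₀₃, h₀₁, h₁₂, h₁₃, h₂₃⟩ x d s s' hs hs'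
    have hx := eq_of_tiles_ne_none (x := x) fun h => by simp [Puzzle.rotate, puzzle, h] at hs
    -- each of the 24 pairs `(x, d)` either leaves the gadget or crosses one of the five joint
    -- edges, from one of its two sides
    rcases hx with rfl | rfl | rfl | rfl <;> fin_cases d <;>
      simp [Puzzle.rotate, puzzle, tiles, dirs] at hs hs' <;> subst hs hs' <;>
      first | assumption | exact Eq.symm ‹_›

def rotation : Color → ℤ × ℤ → Fin 6
  | blue, x => if x = (-1, 0) then 4 else if x = (0, 1) then 1 else 0
  | red, x => if x = (0, 1) then 0 else 1

def solution (c : Color) : ℤ × ℤ → Option Tile := puzzle.rotate (rotation c)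

theorem isSolution_solution (c : Color) : IsSolution puzzle (solution c) :=
  isSolution_rotate_iff.2 (by cases c <;> decide)

theorem rotTile_eq_of_glued (c : Color) {k₀ k₁ k₂ k₃ : Fin 6} (hin : rotTile k₀ brrbrr 3 = c)
    (hglue : Glued k₀ k₁ k₂ k₃) :
    rotTile k₀ brrbrr = rotTile (rotation c (0, 0)) brrbrr ∧
      rotTile k₁ rrbbbb = rotTile (rotation c (-1, 0)) rrbbbb ∧
      rotTile k₂ brrbrr = rotTile (rotation c (-1, 1)) brrbrr ∧
      rotTile k₃ rbbrbb = rotTile (rotation c (0, 1)) rbbrbb := by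
  revert k₀ k₁ k₂ k₃
  cases c <;> decide

theorem eq_solution {c : Color} {sol : ℤ × ℤ → Option Tile} (h : IsSolution puzzle sol)
    (hin : SolColor sol (0, 0) 3 c) : sol = solution c := by
  obtain ⟨k, rfl⟩ := h.exists_eq_rotate
  obtain ⟨h₀, h₁, h₂, h₃⟩ := rotTile_eq_of_glued c (Option.some.inj (solColor_iff.1 hin))
    (isSolution_rotate_iff.1 h)
  refine Puzzle.rotate_congr fun x t ht => ?_
  rcases eq_of_tiles_ne_none (ne_of_eq_of_ne ht (Option.some_ne_none t)) with
    rfl | rfl | rfl | rfl <;> cases ht <;> assumption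

end CopyGadget

/-- the two-color COPY subpuzzle: one input boundary edge at the bottom and two output boundary edges at the top in two distinct columns; for each color `c ∈ {blue, red}` there is exactly one solution with color `c` at the input edge, and it has color `c` at both output edges. -/
theorem two_color_COPY_subpuzzle :
    ∃ (P : Puzzle) (xIn yOut₁ yOut₂ : ℤ × ℤ),
      IsBoundary P xIn 3 ∧ IsBoundary P yOut₁ 0 ∧ IsBoundary P yOut₂ 0 ∧
      yOut₁.1 ≠ yOut₂.1 ∧ xIn.2 < yOut₁.2 ∧ xIn.2 < yOut₂.2 ∧
      ∀ c ∈ ({Color.blue, Color.red} : Set Color),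
        ∃ sol : ℤ × ℤ → Option Tile,
          (IsSolution P sol ∧ SolColor sol xIn 3 c ∧
            SolColor sol yOut₁ 0 c ∧ SolColor sol yOut₂ 0 c) ∧
          (∀ sol' : ℤ × ℤ → Option Tile,
            IsSolution P sol' → SolColor sol' xIn 3 c → sol' = sol) := by
  refine ⟨CopyGadget.puzzle, (0, 0), (-1, 1), (0, 1), by decide, by decide, by decide, by decide,
    by decide, by decide, fun c _ => ⟨CopyGadget.solution c, ⟨CopyGadget.isSolution_solution c, ?_⟩,
      fun _ => CopyGadget.eq_solution⟩⟩
  cases c <;> decide
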